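/- With the same frame and hypotheses as above, the mixed curvature component R₂₁₃₁ = R(e₂,e₁,e₃,e₁) satisfies (1/32)[(23 + 6(cos α + y)²)k₁ - (23 + 6(cos α - y)²)k₂] ≤ R₂₁₃₁ ≤ (1/32)[(23 + 6(cos α + y)²)k₂ - (23 + 6(cos α - y)²)k₁]. -/

import Mathlib

/-!
Write `H v = R(v, Jv, v, Jv)`. For a Kähler curvature tensor, Berger's polarization identity
`32 R(X,Y,X,Y) = 3 H(X+JY) + 3 H(X-JY) - H(X+Y) - H(X-Y) - 4 H(X) - 4 H(Y)` expresses every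
sectional term through holomorphic ones, so the pinching `k₁ |v|⁴ ≤ H v ≤ k₂ |v|⁴` bounds
`R(X,Y,X,Y)` in terms of `|X|²`, `|Y|²`, `⟨X,Y⟩` and `⟨JX,Y⟩`. The mixed component is a difference
of two such terms, `4 R(e₂,e₁,e₃,e₁) = R(e₁,P,e₁,P) - R(e₁,M,e₁,M)` with `P, M = e₂ ± e₃`, and
for these `|P|² = |M|² = 2`, `⟨e₁,P⟩ = ⟨e₁,M⟩ = 0` and `⟨Je₁, P⟩, ⟨Je₁, M⟩ = cos α ± y`.
-/

open scoped RealInnerProductSpace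

section

variable {V : Type*} [NormedAddCommGroup V] [InnerProductSpace ℝ V]

structure IsCurvatureTensor (R : V →ₗ[ℝ] V →ₗ[ℝ] V →ₗ[ℝ] V →ₗ[ℝ] ℝ) : Prop where
  antisymm_left : ∀ x y z w, R x y z w = -R y x z w
  antisymm_right : ∀ x y z w, R x y z w = -R x y w z
  pair_symm : ∀ x y z w, R x y z w = R z w x y
  bianchi : ∀ x y z w, R x y z w + R y z x w + R z x y w = 0

def holomorphicCurvature (R : V →ₗ[ℝ] V →ₗ[ℝ] V →ₗ[ℝ] V →ₗ[ℝ] ℝ) (J : V →ₗ[ℝ] V) (v : V) : ℝ :=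
  R v (J v) v (J v)

-- `map_sub` is of no use here: instance search does not find the `AddCommGroup` structure on
-- `V →ₗ[ℝ] V →ₗ[ℝ] V →ₗ[ℝ] ℝ` (its `AddCommMonoid` is `LinearMap.addCommMonoid`).
theorem LinearMap.sub_apply_left₄ (R : V →ₗ[ℝ] V →ₗ[ℝ] V →ₗ[ℝ] V →ₗ[ℝ] ℝ) (a b c d f : V) :
    R (a - b) c d f = R a c d f - R b c d f := by
  rw [sub_eq_add_neg, ← neg_one_smul ℝ b, map_add, map_smul]
  simp only [LinearMap.add_apply, LinearMap.smul_apply, smul_eq_mul]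
  ring

namespace IsCurvatureTensor

variable {R : V →ₗ[ℝ] V →ₗ[ℝ] V →ₗ[ℝ] V →ₗ[ℝ] ℝ}

theorem four_mul_apply_eq_sub (hR : IsCurvatureTensor R) (X Y Z : V) :
    4 * R Y X Z X = R X (Y + Z) X (Y + Z) - R X (Y - Z) X (Y - Z) := by
  simp only [map_add, map_sub, LinearMap.add_apply, LinearMap.sub_apply]
  linarith [hR.pair_symm X Z X Y, hR.antisymm_left X Y X Z, hR.antisymm_right Y X X Z]

variable {J : V →ₗ[ℝ] V}

local notation "H" => holomorphicCurvature R J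

theorem apply_J_right_eq_neg (hJ : ∀ v, J (J v) = -v) (hJR : ∀ x y z w, R (J x) (J y) z w = R x y z w)
    (x y z w : V) : R x (J y) z w = -R (J x) y z w := by
  simpa [hJ] using (hJR x (J y) z w).symm

set_option maxHeartbeats 400000 in
-- Berger's polarization identity.
theorem thirtytwo_mul_apply_eq (hR : IsCurvatureTensor R) (hJ : ∀ v, J (J v) = -v)
    (hJR : ∀ x y z w, R (J x) (J y) z w = R x y z w) (X Y : V) :
    32 * R X Y X Y = 3 * H (X + J Y) + 3 * H (X - J Y) - H (X + Y) - H (X - Y)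
      - 4 * H X - 4 * H Y := by
  simp only [holomorphicCurvature, map_add, map_sub, map_neg, hJ, LinearMap.add_apply,
    LinearMap.sub_apply, LinearMap.neg_apply, LinearMap.sub_apply_left₄]
  have j3 := apply_J_right_eq_neg hJ hJR X Y X (J Y)
  have j4 := apply_J_right_eq_neg hJ hJR X Y Y (J X)
  linear_combination
      (-2 : ℝ) * hR.antisymm_left X (J X) Y (J Y) + 8 * hR.antisymm_right X (J X) Y (J Y)
      + (-2 : ℝ) * hR.pair_symm X (J X) Y (J Y) + (-2 : ℝ) * hR.bianchi X (J X) Y (J Y)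
      + (-6 : ℝ) * hR.pair_symm X (J X) (J Y) Y + 4 * hR.bianchi X (J X) (J Y) Y
      + (-26 : ℝ) * hJR X Y X Y
      + 2 * hR.antisymm_left X Y (J X) (J Y) + 18 * hR.antisymm_right X Y (J X) (J Y)
      + (-22 : ℝ) * hR.pair_symm X Y (J X) (J Y) + 2 * hR.bianchi X Y (J X) (J Y)
      + (-6 : ℝ) * hR.pair_symm X Y (J Y) (J X) + 6 * hJR X Y (J Y) (J X)
      + 2 * j3
      + (-4 : ℝ) * hR.antisymm_left X (J Y) (J X) Y + 4 * hR.antisymm_right X (J Y) (J X) Y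
      + (-2 : ℝ) * j4
      + 2 * hR.antisymm_left (J X) Y Y (J X)
      + (-6 : ℝ) * hR.antisymm_left (J X) (J Y) (J Y) (J X)
      + 6 * hR.antisymm_right Y (J Y) Y (J Y)
      + (-6 : ℝ) * hR.antisymm_left Y (J Y) (J Y) Y

theorem thirtytwo_mul_apply_bounds (hR : IsCurvatureTensor R) (hJ : ∀ v, J (J v) = -v)
    (hJR : ∀ x y z w, R (J x) (J y) z w = R x y z w) (hJiso : ∀ v w : V, ⟪J v, J w⟫ = ⟪v, w⟫)
    {k₁ k₂ : ℝ} (hlow : ∀ v, k₁ * ‖v‖ ^ 4 ≤ H v) (hhigh : ∀ v, H v ≤ k₂ * ‖v‖ ^ 4) (X Y : V) :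
    3 * k₁ * ((‖X‖ ^ 2 + ‖Y‖ ^ 2 - 2 * ⟪J X, Y⟫) ^ 2 + (‖X‖ ^ 2 + ‖Y‖ ^ 2 + 2 * ⟪J X, Y⟫) ^ 2)
        - k₂ * ((‖X‖ ^ 2 + ‖Y‖ ^ 2 + 2 * ⟪X, Y⟫) ^ 2 + (‖X‖ ^ 2 + ‖Y‖ ^ 2 - 2 * ⟪X, Y⟫) ^ 2)
        - 4 * k₂ * ((‖X‖ ^ 2) ^ 2 + (‖Y‖ ^ 2) ^ 2) ≤ 32 * R X Y X Y ∧
      32 * R X Y X Y ≤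
        3 * k₂ * ((‖X‖ ^ 2 + ‖Y‖ ^ 2 - 2 * ⟪J X, Y⟫) ^ 2 + (‖X‖ ^ 2 + ‖Y‖ ^ 2 + 2 * ⟪J X, Y⟫) ^ 2)
        - k₁ * ((‖X‖ ^ 2 + ‖Y‖ ^ 2 + 2 * ⟪X, Y⟫) ^ 2 + (‖X‖ ^ 2 + ‖Y‖ ^ 2 - 2 * ⟪X, Y⟫) ^ 2)
        - 4 * k₁ * ((‖X‖ ^ 2) ^ 2 + (‖Y‖ ^ 2) ^ 2) := by
  have bound : ∀ v t, ‖v‖ ^ 2 = t → k₁ * t ^ 2 ≤ H v ∧ H v ≤ k₂ * t ^ 2 := by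
    rintro v t rfl
    constructor <;> linarith [hlow v, hhigh v]
  have hJY : ‖J Y‖ ^ 2 = ‖Y‖ ^ 2 := by
    rw [← real_inner_self_eq_norm_sq, ← real_inner_self_eq_norm_sq, hJiso]
  have hXJY : ⟪X, J Y⟫ = -⟪J X, Y⟫ := by
    rw [← hJiso X (J Y), hJ, inner_neg_right]
  obtain ⟨l₁, u₁⟩ := bound (X + J Y) _ (by rw [norm_add_sq_real, hXJY, hJY])
  obtain ⟨l₂, u₂⟩ := bound (X - J Y) _ (by rw [norm_sub_sq_real, hXJY, hJY])
  obtain ⟨l₃, u₃⟩ := bound (X + Y) _ (norm_add_sq_real X Y)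
  obtain ⟨l₄, u₄⟩ := bound (X - Y) _ (norm_sub_sq_real X Y)
  obtain ⟨l₅, u₅⟩ := bound X _ rfl
  obtain ⟨l₆, u₆⟩ := bound Y _ rfl
  rw [hR.thirtytwo_mul_apply_eq hJ hJR]
  constructor <;> linarith

end IsCurvatureTensor

end

theorem stmt_7_general {V : Type*} [NormedAddCommGroup V] [InnerProductSpace ℝ V]
    (R : V →ₗ[ℝ] V →ₗ[ℝ] V →ₗ[ℝ] V →ₗ[ℝ] ℝ) (J : V →ₗ[ℝ] V)
    (hskew1 : ∀ x y z w, R x y z w = -R y x z w)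
    (hskew2 : ∀ x y z w, R x y z w = -R x y w z)
    (hpair : ∀ x y z w, R x y z w = R z w x y)
    (hbianchi : ∀ x y z w, R x y z w + R y z x w + R z x y w = 0)
    (hJ2 : ∀ v, J (J v) = -v)
    (hJiso : ∀ v w : V, ⟪J v, J w⟫ = ⟪v, w⟫)
    (hJinv : ∀ x y z w, R (J x) (J y) z w = R x y z w)
    (k₁ k₂ : ℝ)
    (hlow : ∀ v : V, k₁ * ‖v‖ ^ 4 ≤ R v (J v) v (J v))
    (hhigh : ∀ v : V, R v (J v) v (J v) ≤ k₂ * ‖v‖ ^ 4)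
    (e : Fin 4 → V) (he : Orthonormal ℝ e)
    (c y z : ℝ)
    (hJ1 : J (e 0) = c • e 1 + y • e 2 + z • e 3) :
    (1 / 32) * ((23 + 6 * (c + y) ^ 2) * k₁ - (23 + 6 * (c - y) ^ 2) * k₂)
      ≤ R (e 1) (e 0) (e 2) (e 0) ∧
    R (e 1) (e 0) (e 2) (e 0)
      ≤ (1 / 32) * ((23 + 6 * (c + y) ^ 2) * k₂ - (23 + 6 * (c - y) ^ 2) * k₁) := by
  have hR : IsCurvatureTensor R := ⟨hskew1, hskew2, hpair, hbianchi⟩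
  have hinner := orthonormal_iff_ite.mp he
  have hsum : ‖e 1 + e 2‖ ^ 2 = 2 ∧ ⟪e 0, e 1 + e 2⟫ = 0 ∧ ⟪J (e 0), e 1 + e 2⟫ = c + y := by
    norm_num [norm_add_sq_real, hJ1, inner_add_left, inner_add_right, real_inner_smul_left, hinner,
      he.1, Fin.ext_iff]
  have hdiff : ‖e 1 - e 2‖ ^ 2 = 2 ∧ ⟪e 0, e 1 - e 2⟫ = 0 ∧ ⟪J (e 0), e 1 - e 2⟫ = c - y := by
    norm_num [norm_sub_sq_real, hJ1, inner_add_left, inner_sub_right, real_inner_smul_left, hinner,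
      he.1, Fin.ext_iff]
  obtain ⟨lP, uP⟩ := hR.thirtytwo_mul_apply_bounds hJ2 hJinv hJiso hlow hhigh (e 0) (e 1 + e 2)
  obtain ⟨lM, uM⟩ := hR.thirtytwo_mul_apply_bounds hJ2 hJinv hJiso hlow hhigh (e 0) (e 1 - e 2)
  rw [he.1 0, hsum.1, hsum.2.1, hsum.2.2] at lP uP
  rw [he.1 0, hdiff.1, hdiff.2.1, hdiff.2.2] at lM uM
  have hpolar := hR.four_mul_apply_eq_sub (e 0) (e 1) (e 2)
  constructor <;> linarith

theorem stmt_7 {V : Type*} [NormedAddCommGroup V] [InnerProductSpace ℝ V]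
    (R : V →ₗ[ℝ] V →ₗ[ℝ] V →ₗ[ℝ] V →ₗ[ℝ] ℝ) (J : V →ₗ[ℝ] V)
    (hskew1 : ∀ x y z w, R x y z w = -R y x z w)
    (hskew2 : ∀ x y z w, R x y z w = -R x y w z)
    (hpair : ∀ x y z w, R x y z w = R z w x y)
    (hbianchi : ∀ x y z w, R x y z w + R y z x w + R z x y w = 0)
    (hJ2 : ∀ v, J (J v) = -v)
    (hJiso : ∀ v w : V, ⟪J v, J w⟫ = ⟪v, w⟫)
    (hJinv : ∀ x y z w, R (J x) (J y) z w = R x y z w)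
    (k₁ k₂ : ℝ) (hk₁ : 0 < k₁)
    (hlow : ∀ v : V, k₁ * ‖v‖ ^ 4 ≤ R v (J v) v (J v))
    (hhigh : ∀ v : V, R v (J v) v (J v) ≤ k₂ * ‖v‖ ^ 4)
    (e : Fin 4 → V) (he : Orthonormal ℝ e)
    (c y z : ℝ) (hcyz : c ^ 2 + y ^ 2 + z ^ 2 = 1)
    (hJ1 : J (e 0) = c • e 1 + y • e 2 + z • e 3)
    (hJ2e : J (e 1) = -c • e 0 + z • e 2 - y • e 3)
    (hJ3 : J (e 2) = -y • e 0 - z • e 1 + c • e 3)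
    (hJ4 : J (e 3) = -z • e 0 + y • e 1 - c • e 2) :
    (1 / 32) * ((23 + 6 * (c + y) ^ 2) * k₁ - (23 + 6 * (c - y) ^ 2) * k₂)
      ≤ R (e 1) (e 0) (e 2) (e 0) ∧
    R (e 1) (e 0) (e 2) (e 0)
      ≤ (1 / 32) * ((23 + 6 * (c + y) ^ 2) * k₂ - (23 + 6 * (c - y) ^ 2) * k₁) :=
  stmt_7_general R J hskew1 hskew2 hpair hbianchi hJ2 hJiso hJinv k₁ k₂ hlow hhigh e he c y z hJ1
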